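/- arXiv:1104.3533 — 2 statements merged into one kernel-verified Lean document; each statement's English description precedes it below -/
import Mathlib

section
/- Let (W,S) be an arbitrary Coxeter system and let A ⊆ Φ⁺. Then A = Φ(w) for some w ∈ W if and only if A is finite and biconvex. -/
/-!
Every root is positive or negative. If `ℓ(w sᵢ) > ℓ(w)` then `w αᵢ ∈ Φ⁺`, by induction on `ℓ(w)`:
for a right descent `j` of `w`, write `w = v u` with `u` in the dihedral subgroup `⟨sᵢ, sⱼ⟩`,
`ℓ(w) = ℓ(v) + ℓ(u)` and `ℓ(v)` minimal. Then `v` has neither `i` nor `j` as a right descent, and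
`u` is an alternating word ending in `j` that is shorter than `m = mᵢⱼ`. In rank two,
`u αᵢ = a αᵢ + b αⱼ` with `a, b` values of Chebyshev polynomials `Uₙ(cos (π/m)) =
sin ((n+1)π/m) / sin (π/m)`, `0 ≤ n+1 ≤ m`, hence nonnegative.

Consequently `sᵢ` permutes `Φ⁺ \ {αᵢ}`, so `Φ(w sᵢ) \ {αᵢ} = sᵢ (Φ(w) \ {αᵢ})`: inversion sets are
finite, and `Φ(w)` and its complement in `Φ⁺` are biconvex, being the positive roots that `w`
sends to `Φ⁻` and to `Φ⁺`. Conversely, let `A` be finite, biconvex and nonempty, and `α ∈ A` of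
minimal height. Since `B(α, α) = 1`, some `B(αₖ, α) > 0`, so `sₖ α` is lower than `α`; if
`αₖ ∉ A`, then `α = sₖ α + 2 B(αₖ, α) αₖ` lies in the convex set `Φ⁺ \ A`, a contradiction. Thus
`A` contains a simple root `αᵢ`, `A' = sᵢ (A \ {αᵢ})` is again finite and biconvex, by induction
`A' = Φ(w)`, and then `A = Φ(w sᵢ)`.
-/

/-!
Setup: a Coxeter system `cs : CoxeterSystem M W`, a real vector space `V` with a basis
`e : Basis B ℝ V` of simple roots, a symmetric bilinear form `BF` with
`BF (e i) (e j) = -cos (π / M i j)` (the convention `M i j = 0` means `∞`, and division by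
zero in `ℝ` gives `-cos 0 = -1`), and the geometric representation `ρ : W →* (V →ₗ[ℝ] V)`
determined by `ρ (s i) v = v - 2 ⟪α_i, v⟫ • α_i`.
-/

variable {B : Type*} {W : Type*} [Group W] {V : Type*} [AddCommGroup V] [Module ℝ V]

/-- The root system `Φ = {w • α_i}`. -/
def Phi (ρ : W →* V →ₗ[ℝ] V) (e : Module.Basis B ℝ V) : Set V :=
  {v | ∃ (w : W) (i : B), v = ρ w (e i)}

/-- The positive system `Φ⁺`: roots that are nonnegative combinations of the simple roots. -/
def PhiPos (ρ : W →* V →ₗ[ℝ] V) (e : Module.Basis B ℝ V) : Set V :=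
  {v | v ∈ Phi ρ e ∧ ∀ i : B, (0 : ℝ) ≤ e.repr v i}

/-- The negative system `Φ⁻ = -Φ⁺`. -/
def PhiNeg (ρ : W →* V →ₗ[ℝ] V) (e : Module.Basis B ℝ V) : Set V :=
  {v | -v ∈ PhiPos ρ e}

/-- The inversion set `Φ(w) = Φ⁺ ∩ w⁻¹ Φ⁻`. -/
def InvSet (ρ : W →* V →ₗ[ℝ] V) (e : Module.Basis B ℝ V) (w : W) : Set V :=
  {v | v ∈ PhiPos ρ e ∧ ρ w v ∈ PhiNeg ρ e}

/-- The root sequence `θ̄(x)` of a word `x = (s_1, …, s_n)`: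
`θ_k = s_n ⋯ s_{k+1} (α_{s_k})`. -/
noncomputable def rootSeq {M : CoxeterMatrix B} (cs : CoxeterSystem M W) (ρ : W →* V →ₗ[ℝ] V)
    (e : Module.Basis B ℝ V) : List B → List V
  | [] => []
  | i :: t => ρ (cs.wordProd t)⁻¹ (e i) :: rootSeq cs ρ e t

/-- The data `(e, BF, ρ)` forms the geometric representation of the Coxeter system `cs`. -/
def IsGeometricRep {M : CoxeterMatrix B} (cs : CoxeterSystem M W) (e : Module.Basis B ℝ V)
    (BF : LinearMap.BilinForm ℝ V) (ρ : W →* V →ₗ[ℝ] V) : Prop :=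
  (∀ u v : V, BF u v = BF v u) ∧
  (∀ i j : B, BF (e i) (e j) = - Real.cos (Real.pi / (M i j : ℝ))) ∧
  (∀ (i : B) (v : V), ρ (cs.simple i) v = v - (2 * BF (e i) v) • e i)


/-- A subset `Λ ⊆ Φ⁺` is convex if whenever `α, β ∈ Λ` and a positive root `λ` satisfies
`λ = aα + bβ` with `a, b ≥ 0`, then `λ ∈ Λ`. -/
def ConvexRoots (ρ : W →* V →ₗ[ℝ] V) (e : Module.Basis B ℝ V) (Λ : Set V) : Prop :=
  ∀ α ∈ Λ, ∀ β ∈ Λ, ∀ lam ∈ PhiPos ρ e, ∀ a b : ℝ,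
    0 ≤ a → 0 ≤ b → lam = a • α + b • β → lam ∈ Λ

/-- `Λ ⊆ Φ⁺` is biconvex if both `Λ` and `Φ⁺ \ Λ` are convex. -/
def BiconvexRoots (ρ : W →* V →ₗ[ℝ] V) (e : Module.Basis B ℝ V) (Λ : Set V) : Prop :=
  ConvexRoots ρ e Λ ∧ ConvexRoots ρ e (PhiPos ρ e \ Λ)

open Polynomial.Chebyshev

namespace CoxeterSystem

variable {M : CoxeterMatrix B} (cs : CoxeterSystem M W)

theorem exists_wordProd_alternatingWord_mul_simple {p q x : B} (hx : x ∈ [p, q]) (k : ℕ) :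
    ∃ k' ≤ k + 1, cs.wordProd (alternatingWord p q k) * cs.simple x =
        cs.wordProd (alternatingWord p q k') ∨
      cs.wordProd (alternatingWord p q k) * cs.simple x = cs.wordProd (alternatingWord q p k') := by
  obtain rfl | rfl : x = p ∨ x = q := by simpa using hx
  · exact ⟨k + 1, le_rfl, Or.inr (by rw [alternatingWord_succ, wordProd_concat])⟩
  · cases k with
    | zero => exact ⟨1, le_rfl, Or.inl (by simp [alternatingWord])⟩
    | succ k =>
      refine ⟨k, by omega, Or.inr ?_⟩
      rw [alternatingWord_succ, wordProd_concat, simple_mul_simple_cancel_right]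

theorem exists_wordProd_eq_alternatingWord {i j : B} {ω : List B} (hω : ω ⊆ [i, j]) :
    ∃ k ≤ ω.length, cs.wordProd ω = cs.wordProd (alternatingWord i j k) ∨
      cs.wordProd ω = cs.wordProd (alternatingWord j i k) := by
  induction ω using List.reverseRecOn with
  | nil => exact ⟨0, le_rfl, Or.inl rfl⟩
  | append_singleton ω x ih =>
    obtain ⟨hω, hx⟩ := List.append_subset.1 hω
    have hx : x ∈ [i, j] := hx (List.mem_singleton_self x)
    rw [wordProd_append, wordProd_singleton, List.length_append, List.length_singleton]
    obtain ⟨k, hk, h | h⟩ := ih hω <;> rw [h]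
    · obtain ⟨k', hk', h'⟩ := cs.exists_wordProd_alternatingWord_mul_simple hx k
      exact ⟨k', by omega, h'⟩
    · obtain ⟨k', hk', h'⟩ :=
        cs.exists_wordProd_alternatingWord_mul_simple (by simp at hx ⊢; tauto : x ∈ [j, i]) k
      exact ⟨k', by omega, h'.symm⟩

theorem exists_alternatingWord_of_length_lt {i j : B} {ω : List B} (hω : ω ⊆ [i, j])
    (h : ω.length < cs.length (cs.wordProd ω * cs.simple i)) :
    ∃ k, (M i j = 0 ∨ k < M i j) ∧ cs.wordProd ω = cs.wordProd (alternatingWord i j k) := by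
  obtain ⟨k, hk, hωk | hωk⟩ := cs.exists_wordProd_eq_alternatingWord hω
  · refine ⟨k, ?_, hωk⟩
    by_contra! hMk
    have hred := cs.not_isReduced_alternatingWord j i (m := k + 1)
      (by rw [M.symmetric]; exact hMk.1) (by rw [M.symmetric]; omega)
    have hle := cs.length_wordProd_le (alternatingWord j i (k + 1))
    rw [alternatingWord_succ] at hred hle
    simp only [IsReduced, wordProd_concat, ← hωk, List.length_concat,
      length_alternatingWord] at hred hle
    omega
  · cases k with
    | zero => exact ⟨0, Nat.eq_zero_or_pos _, hωk⟩
    | succ k =>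
      rw [hωk, alternatingWord_succ, wordProd_concat, simple_mul_simple_cancel_right] at h
      have := cs.length_wordProd_le (alternatingWord i j k)
      simp only [length_alternatingWord] at this
      omega

theorem exists_mul_wordProd_of_isRightDescent (i : B) {j : B} {w : W}
    (hj : cs.IsRightDescent w j) :
    ∃ v ω, ω ⊆ [i, j] ∧ w = v * cs.wordProd ω ∧ cs.length v + ω.length = cs.length w ∧
      cs.length v < cs.length w ∧ ∀ x ∈ [i, j], ¬cs.IsRightDescent v x := by
  classical
  let P (n : ℕ) : Prop := ∃ v ω, ω ⊆ [i, j] ∧ w = v * cs.wordProd ω ∧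
    cs.length v + ω.length = cs.length w ∧ cs.length v = n
  have hwj : P (cs.length (w * cs.simple j)) := by
    refine ⟨w * cs.simple j, [j], by simp, ?_, ?_, rfl⟩
    · rw [wordProd_singleton, simple_mul_simple_cancel_right]
    · rw [isRightDescent_iff] at hj
      simpa using hj
  have hP : ∃ n, P n := ⟨_, hwj⟩
  obtain ⟨v, ω, hω, hw, hlen, hv⟩ := Nat.find_spec hP
  refine ⟨v, ω, hω, hw, hlen, (hv ▸ Nat.find_min' hP hwj).trans_lt hj, fun x hx hvx => ?_⟩
  refine Nat.find_min hP (hv ▸ hvx : cs.length (v * cs.simple x) < Nat.find hP)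
    ⟨v * cs.simple x, x :: ω, List.cons_subset.2 ⟨hx, hω⟩, ?_, ?_, rfl⟩
  · rw [wordProd_cons, ← mul_assoc, simple_mul_simple_cancel_right, hw]
  · rw [isRightDescent_iff] at hvx
    simp only [List.length_cons]
    omega

theorem involutive_apply_simple (ρ : W →* V →ₗ[ℝ] V) (i : B) :
    Function.Involutive (ρ (cs.simple i)) := fun v => by
  rw [← Module.End.mul_apply, ← map_mul, simple_mul_simple_self, map_one, Module.End.one_apply]

end CoxeterSystem

section Roots

variable {e : Module.Basis B ℝ V} {ρ : W →* V →ₗ[ℝ] V}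

theorem apply_mem_phi (w : W) {v : V} (hv : v ∈ Phi ρ e) : ρ w v ∈ Phi ρ e := by
  obtain ⟨u, i, rfl⟩ := hv
  exact ⟨w * u, i, by rw [map_mul, Module.End.mul_apply]⟩

theorem simple_mem_phiPos (i : B) : e i ∈ PhiPos ρ e := by
  classical
  refine ⟨⟨1, i, by simp⟩, fun k => ?_⟩
  rw [e.repr_self, Finsupp.single_apply]
  split_ifs <;> norm_num

theorem mem_phiPos_of_smul_add_smul {x y : V} {a b : ℝ} (h : a • x + b • y ∈ Phi ρ e)
    (hx : x ∈ PhiPos ρ e) (hy : y ∈ PhiPos ρ e) (ha : 0 ≤ a) (hb : 0 ≤ b) :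
    a • x + b • y ∈ PhiPos ρ e := by
  refine ⟨h, fun k => ?_⟩
  simp only [map_add, map_smul, Finsupp.add_apply, Finsupp.smul_apply, smul_eq_mul]
  exact add_nonneg (mul_nonneg ha (hx.2 k)) (mul_nonneg hb (hy.2 k))

theorem convexRoots_phiPos : ConvexRoots ρ e (PhiPos ρ e) :=
  fun _ _ _ _ _ hlam _ _ _ _ _ => hlam

theorem ConvexRoots.preimage {Λ : Set V} (hc : ConvexRoots ρ e Λ) (hΛ : Λ ⊆ PhiPos ρ e)
    {f : V →ₗ[ℝ] V} (hf : ∀ v ∈ Phi ρ e, f v ∈ Phi ρ e) :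
    ConvexRoots ρ e {v ∈ PhiPos ρ e | f v ∈ Λ} := by
  rintro α ⟨-, hα⟩ β ⟨-, hβ⟩ lam hlam a b ha hb rfl
  refine ⟨hlam, hc _ hα _ hβ _ ?_ a b ha hb (by rw [map_add, map_smul, map_smul])⟩
  have hflam := hf _ hlam.1
  rw [map_add, map_smul, map_smul] at hflam ⊢
  exact mem_phiPos_of_smul_add_smul hflam (hΛ hα) (hΛ hβ) ha hb

end Roots

namespace Polynomial.Chebyshev

theorem U_eval_cos_pi_div_nonneg {m : ℕ} {n : ℤ} (hn : -1 ≤ n) (hnm : m = 0 ∨ n < m) :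
    0 ≤ (U ℝ n).eval (Real.cos (Real.pi / m)) := by
  rcases Nat.lt_or_ge m 2 with hm | hm
  · interval_cases m
    · simp only [CharP.cast_eq_zero, div_zero, Real.cos_zero, U_eval_one]
      exact_mod_cast (by omega : (0 : ℤ) ≤ n + 1)
    · obtain rfl | rfl : n = -1 ∨ n = 0 := by omega
      all_goals simp
  · have hm' : (1 : ℝ) < m := by exact_mod_cast hm
    have hsin : 0 < Real.sin (Real.pi / m) :=
      Real.sin_pos_of_pos_of_lt_pi (by positivity) (div_lt_self Real.pi_pos hm')
    refine nonneg_of_mul_nonneg_left ?_ hsin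
    rw [U_real_cos]
    have hn' : (0 : ℝ) ≤ n + 1 := by exact_mod_cast (by omega : (0 : ℤ) ≤ n + 1)
    have hnm' : (n : ℝ) + 1 ≤ m := by exact_mod_cast (by omega : n + 1 ≤ m)
    apply Real.sin_nonneg_of_nonneg_of_le_pi (by positivity)
    rw [← mul_div_assoc, div_le_iff₀ (by positivity)]
    nlinarith [Real.pi_pos]

end Polynomial.Chebyshev

namespace IsGeometricRep

variable {M : CoxeterMatrix B} {cs : CoxeterSystem M W} {e : Module.Basis B ℝ V}
  {BF : LinearMap.BilinForm ℝ V} {ρ : W →* V →ₗ[ℝ] V}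

open CoxeterSystem

theorem bilin_comm (hgeo : IsGeometricRep cs e BF ρ) (u v : V) : BF u v = BF v u :=
  hgeo.1 u v

theorem bilin_simple (hgeo : IsGeometricRep cs e BF ρ) (i j : B) :
    BF (e i) (e j) = -Real.cos (Real.pi / M i j) :=
  hgeo.2.1 i j

theorem simple_apply (hgeo : IsGeometricRep cs e BF ρ) (i : B) (v : V) :
    ρ (cs.simple i) v = v - (2 * BF (e i) v) • e i :=
  hgeo.2.2 i v

theorem bilin_simple_self (hgeo : IsGeometricRep cs e BF ρ) (i : B) : BF (e i) (e i) = 1 := by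
  rw [hgeo.bilin_simple i i, M.diagonal i]
  norm_num

theorem simple_apply_simple (hgeo : IsGeometricRep cs e BF ρ) (i : B) :
    ρ (cs.simple i) (e i) = -e i := by
  rw [hgeo.simple_apply, hgeo.bilin_simple_self]
  module

theorem bilin_simple_apply_apply (hgeo : IsGeometricRep cs e BF ρ) (i : B) (u v : V) :
    BF (ρ (cs.simple i) u) (ρ (cs.simple i) v) = BF u v := by
  simp only [hgeo.simple_apply, map_sub, map_smul, LinearMap.sub_apply, LinearMap.smul_apply, smul_eq_mul,
    hgeo.bilin_simple_self, hgeo.bilin_comm u (e i)]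
  ring

theorem bilin_apply_apply (hgeo : IsGeometricRep cs e BF ρ) (w : W) (u v : V) :
    BF (ρ w u) (ρ w v) = BF u v := by
  induction w using cs.simple_induction_left generalizing u v with
  | one => simp
  | mul_simple_left w i ih =>
    rw [map_mul, Module.End.mul_apply, Module.End.mul_apply, hgeo.bilin_simple_apply_apply, ih]

theorem neg_mem_phi (hgeo : IsGeometricRep cs e BF ρ) {v : V} (hv : v ∈ Phi ρ e) :
    -v ∈ Phi ρ e := by
  obtain ⟨w, i, rfl⟩ := hv
  exact ⟨w * cs.simple i, i, by rw [map_mul, Module.End.mul_apply, hgeo.simple_apply_simple,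
    map_neg]⟩

theorem bilin_self_of_mem_phi (hgeo : IsGeometricRep cs e BF ρ) {v : V} (hv : v ∈ Phi ρ e) :
    BF v v = 1 := by
  obtain ⟨w, i, rfl⟩ := hv
  rw [hgeo.bilin_apply_apply, hgeo.bilin_simple_self]

theorem ne_zero_of_mem_phi (hgeo : IsGeometricRep cs e BF ρ) {v : V} (hv : v ∈ Phi ρ e) :
    v ≠ 0 := by
  rintro rfl
  simpa using hgeo.bilin_self_of_mem_phi hv

theorem notMem_phiNeg_of_mem_phiPos (hgeo : IsGeometricRep cs e BF ρ) {v : V}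
    (hv : v ∈ PhiPos ρ e) : v ∉ PhiNeg ρ e := fun hneg => by
  refine hgeo.ne_zero_of_mem_phi hv.1 (e.ext_elem_iff.2 fun k => ?_)
  have := hneg.2 k
  simp only [map_neg, Finsupp.neg_apply, map_zero, Finsupp.coe_zero, Pi.zero_apply] at this ⊢
  linarith [hv.2 k]

theorem smul_neg_simple_notMem_phiPos (hgeo : IsGeometricRep cs e BF ρ) {c : ℝ} (hc : 0 ≤ c)
    (i : B) : c • -e i ∉ PhiPos ρ e := fun hpos => by
  have hi := hpos.2 i
  simp only [smul_neg, map_neg, map_smul, e.repr_self, Finsupp.neg_apply, Finsupp.smul_apply,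
    Finsupp.single_eq_same, smul_eq_mul, mul_one, Left.nonneg_neg_iff] at hi
  obtain rfl : c = 0 := le_antisymm hi hc
  exact hgeo.ne_zero_of_mem_phi hpos.1 (by simp)

theorem neg_simple_notMem_phiPos (hgeo : IsGeometricRep cs e BF ρ) (i : B) :
    -e i ∉ PhiPos ρ e := by
  simpa using hgeo.smul_neg_simple_notMem_phiPos zero_le_one i

theorem apply_wordProd_alternatingWord (hgeo : IsGeometricRep cs e BF ρ) (i j : B) (k : ℕ) :
    ρ (cs.wordProd (alternatingWord i j k)) (e i) =
      if Even k then
        (U ℝ k).eval (Real.cos (Real.pi / M i j)) • e i +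
          (U ℝ (k - 1)).eval (Real.cos (Real.pi / M i j)) • e j
      else
        (U ℝ (k - 1)).eval (Real.cos (Real.pi / M i j)) • e i +
          (U ℝ k).eval (Real.cos (Real.pi / M i j)) • e j := by
  set c := Real.cos (Real.pi / M i j)
  have hij : BF (e i) (e j) = -c := hgeo.bilin_simple i j
  have hji : BF (e j) (e i) = -c := by rw [hgeo.bilin_comm, hij]
  have hrec (n : ℤ) : (U ℝ (n + 1)).eval c = 2 * c * (U ℝ n).eval c - (U ℝ (n - 1)).eval c := by
    simp [U_add_one]
  induction k with
  | zero => simp [alternatingWord]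
  | succ k ih =>
    rw [alternatingWord_succ', wordProd_cons, map_mul, Module.End.mul_apply, ih]
    by_cases hk : Even k <;>
      simp only [hk, Nat.even_add_one, not_true_eq_false, not_false_eq_true, if_true, if_false,
        hgeo.simple_apply, map_add, map_smul, smul_eq_mul, hij, hji, hgeo.bilin_simple_self] <;>
      push_cast <;> rw [add_sub_cancel_right, hrec] <;> module

theorem exists_nonneg_apply_wordProd_alternatingWord (hgeo : IsGeometricRep cs e BF ρ)
    {i j : B} {k : ℕ} (hk : M i j = 0 ∨ k < M i j) :
    ∃ a b : ℝ, 0 ≤ a ∧ 0 ≤ b ∧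
      ρ (cs.wordProd (alternatingWord i j k)) (e i) = a • e i + b • e j := by
  have hU {n : ℤ} (h1 : -1 ≤ n) (h2 : n ≤ k) : 0 ≤ (U ℝ n).eval (Real.cos (Real.pi / M i j)) :=
    U_eval_cos_pi_div_nonneg h1 (by omega)
  rw [hgeo.apply_wordProd_alternatingWord]
  split_ifs
  · exact ⟨_, _, hU (by omega) le_rfl, hU (by omega) (by omega), rfl⟩
  · exact ⟨_, _, hU (by omega) (by omega), hU (by omega) le_rfl, rfl⟩

theorem mem_phiPos_of_not_isRightDescent (hgeo : IsGeometricRep cs e BF ρ) {w : W} {i : B}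
    (h : ¬cs.IsRightDescent w i) : ρ w (e i) ∈ PhiPos ρ e := by
  induction hn : cs.length w using Nat.strong_induction_on generalizing w i with
  | _ n ih =>
  obtain rfl | hw := eq_or_ne w 1
  · simpa using simple_mem_phiPos i
  obtain ⟨j, hj⟩ := cs.exists_rightDescent_of_ne_one hw
  obtain ⟨v, ω, hω, rfl, hlen, hvw, hv⟩ := cs.exists_mul_wordProd_of_isRightDescent i hj
  have hωi : ω.length < cs.length (cs.wordProd ω * cs.simple i) := by
    have := cs.length_mul_le v (cs.wordProd ω * cs.simple i)
    rw [cs.not_isRightDescent_iff, mul_assoc] at h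
    omega
  obtain ⟨k, hk, hωk⟩ := cs.exists_alternatingWord_of_length_lt hω hωi
  obtain ⟨a, b, ha, hb, hab⟩ := hgeo.exists_nonneg_apply_wordProd_alternatingWord hk
  have hroot : ρ (v * cs.wordProd ω) (e i) = a • ρ v (e i) + b • ρ v (e j) := by
    rw [map_mul, Module.End.mul_apply, hωk, hab, map_add, map_smul, map_smul]
  rw [hroot]
  exact mem_phiPos_of_smul_add_smul (hroot ▸ ⟨_, i, rfl⟩)
    (ih _ (hn ▸ hvw) (hv i (by simp)) rfl) (ih _ (hn ▸ hvw) (hv j (by simp)) rfl) ha hb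

theorem mem_phiPos_or_mem_phiNeg (hgeo : IsGeometricRep cs e BF ρ) {v : V} (hv : v ∈ Phi ρ e) :
    v ∈ PhiPos ρ e ∨ v ∈ PhiNeg ρ e := by
  obtain ⟨w, i, rfl⟩ := hv
  by_cases h : cs.IsRightDescent w i
  · have := hgeo.mem_phiPos_of_not_isRightDescent (cs.isRightDescent_iff_not_isRightDescent_mul.1 h)
    rw [map_mul, Module.End.mul_apply, hgeo.simple_apply_simple, map_neg] at this
    exact Or.inr this
  · exact Or.inl (hgeo.mem_phiPos_of_not_isRightDescent h)

theorem mem_phiNeg_iff_notMem_phiPos (hgeo : IsGeometricRep cs e BF ρ) {v : V}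
    (hv : v ∈ Phi ρ e) : v ∈ PhiNeg ρ e ↔ v ∉ PhiPos ρ e :=
  ⟨fun hneg hpos => hgeo.notMem_phiNeg_of_mem_phiPos hpos hneg,
    (hgeo.mem_phiPos_or_mem_phiNeg hv).resolve_left⟩

theorem eq_simple_of_simple_apply_mem_phiNeg (hgeo : IsGeometricRep cs e BF ρ) {i : B} {β : V}
    (hβ : β ∈ PhiPos ρ e) (hneg : ρ (cs.simple i) β ∈ PhiNeg ρ e) : β = e i := by
  classical
  have hβi : β = e.repr β i • e i := by
    refine e.ext_elem_iff.2 fun k => ?_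
    rcases eq_or_ne k i with rfl | hk
    · simp
    · have := hneg.2 k
      simp only [hgeo.simple_apply, map_neg, map_sub, map_smul, e.repr_self, Finsupp.neg_apply,
        Finsupp.sub_apply, Finsupp.smul_apply, Finsupp.single_apply, if_neg hk.symm, smul_eq_mul,
        mul_zero, sub_zero, Left.nonneg_neg_iff] at this ⊢
      linarith [hβ.2 k]
  have hnorm := hgeo.bilin_self_of_mem_phi hβ.1
  rw [hβi, map_smul, map_smul, LinearMap.smul_apply, hgeo.bilin_simple_self, smul_eq_mul,
    smul_eq_mul, mul_one] at hnorm
  have hβi1 : e.repr β i = 1 := by nlinarith [hβ.2 i]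
  rw [hβi, hβi1, one_smul]

theorem simple_apply_mem_phiPos (hgeo : IsGeometricRep cs e BF ρ) {i : B} {β : V}
    (hβ : β ∈ PhiPos ρ e) (hne : β ≠ e i) : ρ (cs.simple i) β ∈ PhiPos ρ e :=
  (hgeo.mem_phiPos_or_mem_phiNeg (apply_mem_phi _ hβ.1)).resolve_right
    fun h => hne (hgeo.eq_simple_of_simple_apply_mem_phiNeg hβ h)

theorem invSet_one (hgeo : IsGeometricRep cs e BF ρ) : InvSet ρ e 1 = ∅ :=
  Set.eq_empty_of_forall_notMem fun _ ⟨hpos, hneg⟩ =>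
    hgeo.notMem_phiNeg_of_mem_phiPos hpos (by simpa using hneg)

theorem mem_invSet_mul_simple_iff (hgeo : IsGeometricRep cs e BF ρ) {w : W} {i : B} {α : V}
    (hα : α ∈ PhiPos ρ e) (hne : α ≠ e i) :
    α ∈ InvSet ρ e (w * cs.simple i) ↔ ρ (cs.simple i) α ∈ InvSet ρ e w := by
  simp only [InvSet, Set.mem_ofPred_eq, map_mul, Module.End.mul_apply, hα,
    hgeo.simple_apply_mem_phiPos hα hne, true_and]

theorem simple_mem_invSet_mul_simple_iff (hgeo : IsGeometricRep cs e BF ρ) {w : W} {i : B} :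
    e i ∈ InvSet ρ e (w * cs.simple i) ↔ e i ∉ InvSet ρ e w := by
  simp only [InvSet, Set.mem_ofPred_eq, simple_mem_phiPos, true_and]
  rw [hgeo.mem_phiNeg_iff_notMem_phiPos (apply_mem_phi w ⟨1, i, by simp⟩), not_not, map_mul,
    Module.End.mul_apply, hgeo.simple_apply_simple, map_neg]
  exact iff_of_eq (congrArg (· ∈ PhiPos ρ e) (neg_neg _))

theorem invSet_finite (hgeo : IsGeometricRep cs e BF ρ) (w : W) : (InvSet ρ e w).Finite := by
  induction w using cs.simple_induction_right with
  | one => simp [hgeo.invSet_one]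
  | mul_simple_right w i ih =>
    refine ((ih.image (ρ (cs.simple i))).insert (e i)).subset fun α hα => ?_
    by_cases hαi : α = e i
    · exact .inl hαi
    · refine .inr ⟨ρ (cs.simple i) α, ?_, cs.involutive_apply_simple ρ i α⟩
      exact (hgeo.mem_invSet_mul_simple_iff hα.1 hαi).1 hα

theorem biconvexRoots_invSet (hgeo : IsGeometricRep cs e BF ρ) (w : W) :
    BiconvexRoots ρ e (InvSet ρ e w) := by
  have hcompl : PhiPos ρ e \ InvSet ρ e w = {v ∈ PhiPos ρ e | ρ w v ∈ PhiPos ρ e} := by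
    ext v
    simp only [InvSet, Set.mem_sdiff, Set.mem_ofPred_eq, not_and, and_congr_right_iff]
    intro hv
    rw [hgeo.mem_phiNeg_iff_notMem_phiPos (apply_mem_phi w hv.1)]
    tauto
  refine ⟨?_, hcompl ▸ convexRoots_phiPos.preimage subset_rfl fun v hv => apply_mem_phi w hv⟩
  exact convexRoots_phiPos.preimage (f := -ρ w) subset_rfl
    fun v hv => hgeo.neg_mem_phi (apply_mem_phi w hv)

theorem exists_bilin_simple_pos (hgeo : IsGeometricRep cs e BF ρ) {α : V}
    (hα : α ∈ PhiPos ρ e) : ∃ k, 0 < BF (e k) α := by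
  by_contra! h
  have hsum : BF α α = (e.repr α).sum fun k c => c * BF (e k) α := by
    have := Finsupp.apply_linearCombination ℝ (BF.flip α) e (e.repr α)
    rw [e.linearCombination_repr] at this
    simpa [Finsupp.linearCombination_apply] using this
  have : (e.repr α).sum (fun k c => c * BF (e k) α) ≤ 0 :=
    Finset.sum_nonpos fun k _ => mul_nonpos_of_nonneg_of_nonpos (hα.2 k) (h k)
  linarith [hgeo.bilin_self_of_mem_phi hα.1]

theorem exists_simple_mem (hgeo : IsGeometricRep cs e BF ρ) {A : Set V}
    (hA : A ⊆ PhiPos ρ e) (hfin : A.Finite) (hne : A.Nonempty)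
    (hc : ConvexRoots ρ e (PhiPos ρ e \ A)) : ∃ i, e i ∈ A := by
  obtain ⟨α, hαA, hmin⟩ := A.exists_min_image e.sumCoords hfin hne
  obtain ⟨k, hk⟩ := hgeo.exists_bilin_simple_pos (hA hαA)
  refine ⟨k, by_contra fun hkA => ?_⟩
  have hαk : α ≠ e k := fun h => hkA (h ▸ hαA)
  have hβ : ρ (cs.simple k) α ∈ PhiPos ρ e := hgeo.simple_apply_mem_phiPos (hA hαA) hαk
  have hβA : ρ (cs.simple k) α ∉ A := fun hβA => by
    have := hmin _ hβA
    rw [hgeo.simple_apply, map_sub, map_smul, e.sumCoords_self_apply, smul_eq_mul, mul_one] at this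
    linarith
  refine (hc _ ⟨hβ, hβA⟩ _ ⟨simple_mem_phiPos k, hkA⟩ α (hA hαA) 1 (2 * BF (e k) α) zero_le_one
    (by positivity) ?_).2 hαA
  rw [hgeo.simple_apply]
  module

theorem mem_of_smul_neg_simple_add_smul_mem (hgeo : IsGeometricRep cs e BF ρ) {A : Set V}
    (hc : ConvexRoots ρ e A) (hA : A ⊆ PhiPos ρ e) {i : B} (hi : e i ∈ A) {γ : V}
    (hγ : γ ∈ PhiPos ρ e) {a b : ℝ} (ha : 0 ≤ a) (hb : 0 ≤ b) (h : a • -e i + b • γ ∈ A) :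
    γ ∈ A := by
  rcases hb.eq_or_lt with rfl | hb
  · exact absurd (hA h) (by simpa using hgeo.smul_neg_simple_notMem_phiPos ha i)
  · refine hc _ h _ hi γ hγ b⁻¹ (b⁻¹ * a) (by positivity) (by positivity) ?_
    rw [smul_add, smul_smul, smul_smul, inv_mul_cancel₀ hb.ne', one_smul]
    module

theorem biconvexRoots_preimage_simple (hgeo : IsGeometricRep cs e BF ρ) {A : Set V}
    (hA : A ⊆ PhiPos ρ e) (hbi : BiconvexRoots ρ e A) {i : B} (hi : e i ∈ A) :
    BiconvexRoots ρ e {v ∈ PhiPos ρ e | ρ (cs.simple i) v ∈ A} := by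
  refine ⟨hbi.1.preimage hA fun v hv => apply_mem_phi _ hv, ?_⟩
  have hcompl {γ : V} (hγ : γ ∈ PhiPos ρ e) (hγA : ρ (cs.simple i) γ ∉ A) :
      γ = e i ∨ ρ (cs.simple i) γ ∈ PhiPos ρ e \ A :=
    or_iff_not_imp_left.2 fun hne => ⟨hgeo.simple_apply_mem_phiPos hγ hne, hγA⟩
  rintro α ⟨hα, hαA⟩ β ⟨hβ, hβA⟩ lam hlam a b ha hb rfl
  refine ⟨hlam, fun ⟨_, hμ⟩ => ?_⟩
  rw [map_add, map_smul, map_smul] at hμ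
  rcases hcompl hα (fun h => hαA ⟨hα, h⟩) with rfl | hα' <;>
    rcases hcompl hβ (fun h => hβA ⟨hβ, h⟩) with rfl | hβ'
  · rw [hgeo.simple_apply_simple, ← add_smul] at hμ
    exact hgeo.smul_neg_simple_notMem_phiPos (add_nonneg ha hb) i (hA hμ)
  · rw [hgeo.simple_apply_simple] at hμ
    exact hβ'.2 (hgeo.mem_of_smul_neg_simple_add_smul_mem hbi.1 hA hi hβ'.1 ha hb hμ)
  · rw [hgeo.simple_apply_simple, add_comm] at hμ
    exact hα'.2 (hgeo.mem_of_smul_neg_simple_add_smul_mem hbi.1 hA hi hα'.1 hb ha hμ)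
  · exact (hbi.2 _ hα' _ hβ' _ (hA hμ) a b ha hb rfl).2 hμ

theorem image_simple_sep_simple_mem (hgeo : IsGeometricRep cs e BF ρ) {A : Set V}
    (hA : A ⊆ PhiPos ρ e) (i : B) :
    ρ (cs.simple i) '' {v ∈ PhiPos ρ e | ρ (cs.simple i) v ∈ A} = A \ {e i} := by
  have hs := cs.involutive_apply_simple ρ i
  ext α
  constructor
  · rintro ⟨v, ⟨hv, hvA⟩, rfl⟩
    refine ⟨hvA, fun h => hgeo.neg_simple_notMem_phiPos i ?_⟩
    rwa [← hgeo.simple_apply_simple, ← Set.mem_singleton_iff.1 h, hs]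
  · rintro ⟨hαA, hαi⟩
    exact ⟨_, ⟨hgeo.simple_apply_mem_phiPos (hA hαA) hαi, by rwa [hs]⟩, hs α⟩

theorem eq_invSet_mul_simple (hgeo : IsGeometricRep cs e BF ρ) {A : Set V}
    (hA : A ⊆ PhiPos ρ e) {i : B} (hi : e i ∈ A) {w : W}
    (hw : {v ∈ PhiPos ρ e | ρ (cs.simple i) v ∈ A} = InvSet ρ e w) :
    A = InvSet ρ e (w * cs.simple i) := by
  ext α
  by_cases hα : α ∈ PhiPos ρ e
  swap
  · exact iff_of_false (fun h => hα (hA h)) (fun h => hα h.1)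
  rcases eq_or_ne α (e i) with rfl | hαi
  · rw [hgeo.simple_mem_invSet_mul_simple_iff, ← hw]
    refine iff_of_true hi fun ⟨_, h⟩ => ?_
    rw [hgeo.simple_apply_simple] at h
    exact hgeo.neg_simple_notMem_phiPos i (hA h)
  · rw [hgeo.mem_invSet_mul_simple_iff hα hαi, ← hw, Set.mem_sep_iff,
      cs.involutive_apply_simple ρ i α]
    exact ⟨fun h => ⟨hgeo.simple_apply_mem_phiPos hα hαi, h⟩, And.right⟩

theorem exists_eq_invSet_of_finite_of_biconvexRoots (hgeo : IsGeometricRep cs e BF ρ)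
    {A : Set V} (hA : A ⊆ PhiPos ρ e) (hfin : A.Finite) (hbi : BiconvexRoots ρ e A) :
    ∃ w, A = InvSet ρ e w := by
  induction hn : A.ncard generalizing A with
  | zero => exact ⟨1, by rw [hgeo.invSet_one, ← Set.ncard_eq_zero hfin, hn]⟩
  | succ n ih =>
    obtain ⟨i, hi⟩ :=
      hgeo.exists_simple_mem hA hfin (Set.nonempty_of_ncard_ne_zero (by omega)) hbi.2
    have hs := cs.involutive_apply_simple ρ i
    have himage := hgeo.image_simple_sep_simple_mem hA i
    obtain ⟨w, hw⟩ := ih (Set.sep_subset _ _)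
      (Set.Finite.of_finite_image (himage ▸ hfin.sdiff) hs.injective.injOn)
      (hgeo.biconvexRoots_preimage_simple hA hbi hi)
      (by rw [← Set.ncard_image_of_injective _ hs.injective, himage,
        Set.ncard_sdiff_singleton_of_mem hi, hn, Nat.add_sub_cancel])
    exact ⟨w * cs.simple i, hgeo.eq_invSet_mul_simple hA hi hw⟩

end IsGeometricRep

/-- A subset `A ⊆ Φ⁺` equals `Φ(w)` for some `w ∈ W` if and only if `A` is
finite and biconvex. -/
theorem eq_invSet_iff_finite_biconvex
    {M : CoxeterMatrix B} (cs : CoxeterSystem M W) (e : Module.Basis B ℝ V)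
    (BF : LinearMap.BilinForm ℝ V) (ρ : W →* V →ₗ[ℝ] V)
    (hgeo : IsGeometricRep cs e BF ρ) (A : Set V) (hA : A ⊆ PhiPos ρ e) :
    (∃ w : W, A = InvSet ρ e w) ↔ A.Finite ∧ BiconvexRoots ρ e A := by
  constructor
  · rintro ⟨w, rfl⟩
    exact ⟨hgeo.invSet_finite w, hgeo.biconvexRoots_invSet w⟩
  · rintro ⟨hfin, hbi⟩
    exact hgeo.exists_eq_invSet_of_finite_of_biconvexRoots hA hfin hbi
end

section
/- If x is a reduced expression for w ∈ W, then the standard encoding T_x of x is a standard labeling of Φ⁺. -/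
/-!
Setup: a Coxeter system `cs : CoxeterSystem M W`, a real vector space `V` with a basis
`e : Basis B ℝ V` of simple roots, a symmetric bilinear form `BF` with
`BF (e i) (e j) = -cos (π / M i j)` (the convention `M i j = 0` means `∞`, and division by
zero in `ℝ` gives `-cos 0 = -1`), and the geometric representation `ρ : W →* (V →ₗ[ℝ] V)`
determined by `ρ (s i) v = v - 2 ⟪α_i, v⟫ • α_i`.
-/

variable {B : Type*} {W : Type*} [Group W] {V : Type*} [AddCommGroup V] [Module ℝ V]

/-- A labeling `T : Φ⁺ → ℕ` is *standard* if whenever a positive root `γ` lies in the convex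
cone spanned by distinct positive roots `α` and `β`, the label `T γ` lies between `T α` and
`T β`. -/
def IsStandardLabeling (ρ : W →* V →ₗ[ℝ] V) (e : Module.Basis B ℝ V)
    (T : PhiPos ρ e → ℕ) : Prop :=
  ∀ (α β γ : PhiPos ρ e) (a b : ℝ), α ≠ β → 0 ≤ a → 0 ≤ b →
    (γ : V) = a • (α : V) + b • (β : V) →
    (T α ≤ T γ ∧ T γ ≤ T β) ∨ (T β ≤ T γ ∧ T γ ≤ T α)

/-- A labeling `T : Φ⁺ → ℕ` is *sequential* if its support is finite and the nonzero labels
are exactly `{1, …, |supp T|}`. -/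
def IsSequentialLabeling (ρ : W →* V →ₗ[ℝ] V) (e : Module.Basis B ℝ V)
    (T : PhiPos ρ e → ℕ) : Prop :=
  ∃ s : Finset (PhiPos ρ e), (∀ lam, lam ∈ s ↔ T lam ≠ 0) ∧
    T '' ↑s = Set.Icc 1 s.card

open scoped Classical in
/-- The *standard encoding* `T_x` of an expression `x`: the `k`-th entry of the root sequence
gets label `k`, and roots not occurring in the root sequence get label `0`. -/
noncomputable def stdEncoding {M : CoxeterMatrix B} (cs : CoxeterSystem M W)
    (ρ : W →* V →ₗ[ℝ] V) (e : Module.Basis B ℝ V) (l : List B) : PhiPos ρ e → ℕ :=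
  fun lam => if (lam : V) ∈ rootSeq cs ρ e l
    then (rootSeq cs ρ e l).idxOf (lam : V) + 1 else 0

/-!
Write `w_k` for the product of the suffix `l.drop k`, so that `θ_m = w_{m+1}⁻¹ α_{l_m}` (indexing
from `0`). For a reduced word `l`, the root `w_k θ_m` is `v α_{l_m}` if `m < k` and `-v α_{l_m}` if
`k ≤ m`, where `v` is the product of a subword with `ℓ(v s_{l_m}) > ℓ(v)`; a positive root outside
the root sequence stays positive under every `w_k`, since `s_i` permutes the positive roots other
than `α_i`. Hence `T(λ) ≤ k` iff `w_k λ > 0` and `T(λ) > k` iff `w_k λ < 0`. Both conditions are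
preserved by nonnegative combinations, which places `T(γ)` between `T(α)` and `T(β)`.

Everything rests on `w α_i > 0` whenever `ℓ(w s_i) > ℓ(w)`. This is proved by induction on `ℓ(w)`:
split off from `w` a maximal length-additive alternating tail `⋯ s_i s_j`, whose action on `α_i`
has Chebyshev coefficients `S_n(2 cos(π/m_{ij})) = sin((n+1)π/m_{ij}) / sin(π/m_{ij}) ≥ 0`.
-/

theorem Polynomial.Chebyshev.S_eval_two_mul_cos_pi_div_nonneg {m : ℕ} (hm : m ≠ 1) {n : ℤ}
    (hn : -1 ≤ n) (hnm : m = 0 ∨ n < m) :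
    0 ≤ (S ℝ n).eval (2 * Real.cos (Real.pi / m)) := by
  obtain rfl | hm0 := eq_or_ne m 0
  · simp only [CharP.cast_eq_zero, div_zero, Real.cos_zero, mul_one, S_eval_two]
    exact_mod_cast (by omega : 0 ≤ n + 1)
  have hm2 : (2 : ℝ) ≤ m := by exact_mod_cast (by omega : 2 ≤ m)
  have hsin : 0 < Real.sin (Real.pi / m) := by
    apply Real.sin_pos_of_pos_of_lt_pi (by positivity)
    rw [div_lt_iff₀ (by positivity)]
    nlinarith [Real.pi_pos]
  have hsin_mul : 0 ≤ Real.sin ((n + 1) * (Real.pi / m)) := by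
    apply Real.sin_nonneg_of_nonneg_of_le_pi
    · have : (0 : ℝ) ≤ n + 1 := by exact_mod_cast (by omega : 0 ≤ n + 1)
      positivity
    · have : (n + 1 : ℝ) ≤ m := by exact_mod_cast (by omega : n + 1 ≤ m)
      calc (n + 1) * (Real.pi / m) ≤ m * (Real.pi / m) := by gcongr
        _ = Real.pi := by field_simp
  rw [← S_two_mul_real_cos] at hsin_mul
  exact nonneg_of_mul_nonneg_left hsin_mul hsin

namespace CoxeterSystem

variable {M : CoxeterMatrix B} (cs : CoxeterSystem M W)

def dropAlternating (w : W) (i j : B) (k : ℕ) : W :=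
  w * (cs.wordProd (alternatingWord i j k))⁻¹

section DropAlternating

variable (w : W) (i j : B)

theorem dropAlternating_mul_wordProd (k : ℕ) :
    cs.dropAlternating w i j k * cs.wordProd (alternatingWord i j k) = w := by
  simp [dropAlternating]

theorem dropAlternating_succ (k : ℕ) :
    cs.dropAlternating w i j (k + 1) =
      cs.dropAlternating w i j k * cs.simple (if Even k then j else i) := by
  simp [dropAlternating, alternatingWord_succ', wordProd_cons, mul_assoc]

theorem dropAlternating_succ_mul_simple (k : ℕ) :
    cs.dropAlternating w i j (k + 1) * cs.simple (if Even k then j else i) =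
      cs.dropAlternating w i j k := by
  rw [dropAlternating_succ, simple_mul_simple_cancel_right]

theorem length_le_length_dropAlternating_add (k : ℕ) :
    cs.length w ≤ cs.length (cs.dropAlternating w i j k) + k := by
  conv_lhs => rw [← cs.dropAlternating_mul_wordProd w i j k]
  have := cs.length_wordProd_le (alternatingWord i j k)
  rw [length_alternatingWord] at this
  linarith [cs.length_mul_le (cs.dropAlternating w i j k) (cs.wordProd (alternatingWord i j k))]

end DropAlternating

variable {cs}

/-- The braid relation rewrites a full alternating tail of length `m_{ij}` to end in `sᵢ`. -/
theorem isRightDescent_of_length_dropAlternating_braid {w : W} {i j : B} (hM : M i j ≠ 0)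
    (h : cs.length (cs.dropAlternating w i j (M i j)) + M i j = cs.length w) :
    cs.IsRightDescent w i := by
  obtain ⟨k, hk⟩ := Nat.exists_eq_succ_of_ne_zero hM
  have hbraid : cs.wordProd (alternatingWord i j (M i j)) =
      cs.wordProd (alternatingWord i j k) * cs.simple i := by
    have := cs.wordProd_braidWord_eq i j
    rw [braidWord, braidWord, M.symmetric j i, hk, alternatingWord_succ j i] at this
    rw [hk, this, wordProd_concat]
  have hw : w * cs.simple i =
      cs.dropAlternating w i j (M i j) * cs.wordProd (alternatingWord i j k) := by
    conv_lhs => rw [← cs.dropAlternating_mul_wordProd w i j (M i j)]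
    rw [hbraid, ← mul_assoc, simple_mul_simple_cancel_right]
  have := cs.length_wordProd_le (alternatingWord i j k)
  rw [length_alternatingWord] at this
  unfold IsRightDescent
  rw [hw]
  linarith [cs.length_mul_le (cs.dropAlternating w i j (M i j))
    (cs.wordProd (alternatingWord i j k))]

theorem exists_dropAlternating_not_isRightDescent {w : W} {i j : B}
    (hi : ¬cs.IsRightDescent w i) (hj : cs.IsRightDescent w j) :
    ∃ k, (M i j = 0 ∨ k < M i j) ∧ cs.length (cs.dropAlternating w i j k) < cs.length w ∧
      ¬cs.IsRightDescent (cs.dropAlternating w i j k) i ∧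
      ¬cs.IsRightDescent (cs.dropAlternating w i j k) j := by
  classical
  let Good k := cs.length (cs.dropAlternating w i j k) + k = cs.length w ∧ (M i j = 0 ∨ k ≤ M i j)
  have hGood1 : Good 1 := by
    refine ⟨?_, by omega⟩
    simpa [dropAlternating, alternatingWord] using cs.isRightDescent_iff.mp hj
  have hw : 1 ≤ cs.length w := by have := hGood1.1; omega
  obtain ⟨k, hK⟩ : ∃ k, Nat.findGreatest Good (cs.length w) = k + 1 :=
    Nat.exists_eq_add_one_of_ne_zero (Nat.one_le_iff_ne_zero.mp (Nat.le_findGreatest hw hGood1))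
  obtain ⟨hlen, hbound⟩ : Good (k + 1) := hK ▸ Nat.findGreatest_spec hw hGood1
  have hbound' : M i j = 0 ∨ k + 1 < M i j := by
    by_contra! h
    exact hi (isRightDescent_of_length_dropAlternating_braid h.1 (by grind))
  have hnext : ¬cs.IsRightDescent (cs.dropAlternating w i j (k + 1))
      (if Even (k + 1) then j else i) := by
    intro h
    rw [isRightDescent_iff, ← dropAlternating_succ] at h
    exact Nat.findGreatest_is_greatest (P := Good) (n := cs.length w) (k := k + 1 + 1)
      (by omega) (by omega) ⟨by omega, by omega⟩
  have hprev : ¬cs.IsRightDescent (cs.dropAlternating w i j (k + 1))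
      (if Even k then j else i) := by
    rw [IsRightDescent, dropAlternating_succ_mul_simple]
    have := cs.length_le_length_dropAlternating_add w i j k
    omega
  refine ⟨k + 1, by omega, by omega, ?_⟩
  rcases Nat.even_or_odd k with hk | hk
  · simp_all [Nat.even_add_one]
  · simp_all [Nat.not_even_iff_odd.mpr hk]

theorem not_isRightDescent_of_isReduced_append_singleton {ω : List B} {i : B}
    (h : cs.IsReduced (ω ++ [i])) : ¬cs.IsRightDescent (cs.wordProd ω) i := by
  have h' : cs.length (cs.wordProd ω * cs.simple i) = ω.length + 1 := by
    simpa [wordProd_append] using h.eq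
  have := cs.length_wordProd_le ω
  unfold IsRightDescent
  omega

variable (cs)

theorem wordProd_drop_eq_mul (l : List B) {a b : ℕ} (hab : a ≤ b) :
    cs.wordProd (l.drop a) = cs.wordProd ((l.drop a).take (b - a)) * cs.wordProd (l.drop b) := by
  rw [← wordProd_append]
  congr 1
  conv_lhs => rw [← List.take_append_drop (b - a) (l.drop a)]
  rw [List.drop_drop, Nat.add_sub_cancel' hab]

end CoxeterSystem

section RootSeq

variable {M : CoxeterMatrix B} (cs : CoxeterSystem M W) (ρ : W →* V →ₗ[ℝ] V)
  (e : Module.Basis B ℝ V)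

theorem map_mem_Phi {v : V} (hv : v ∈ Phi ρ e) (g : W) : ρ g v ∈ Phi ρ e := by
  obtain ⟨w, i, rfl⟩ := hv
  exact ⟨g * w, i, by rw [map_mul, Module.End.mul_apply]⟩

theorem length_rootSeq (l : List B) : (rootSeq cs ρ e l).length = l.length := by
  induction l with
  | nil => rfl
  | cons i t ih => simp [rootSeq, ih]

theorem getElem_rootSeq (l : List B) (m : ℕ) (hm : m < (rootSeq cs ρ e l).length) :
    (rootSeq cs ρ e l)[m] =
      ρ (cs.wordProd (l.drop (m + 1)))⁻¹ (e (l[m]'(length_rootSeq cs ρ e l ▸ hm))) := by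
  induction l generalizing m with
  | nil => simp [rootSeq] at hm
  | cons i t ih =>
    cases m with
    | zero => simp [rootSeq]
    | succ m => simpa [rootSeq] using ih m (by simpa [rootSeq] using hm)

theorem stdEncoding_le_length (l : List B) (lam : PhiPos ρ e) :
    stdEncoding cs ρ e l lam ≤ l.length := by
  classical
  unfold stdEncoding
  split_ifs with h
  · have := List.idxOf_lt_length_iff.mpr h
    rw [length_rootSeq] at this
    omega
  · omega

end RootSeq

namespace IsGeometricRep

open CoxeterSystem Polynomial.Chebyshev

variable {M : CoxeterMatrix B} {cs : CoxeterSystem M W} {e : Module.Basis B ℝ V}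
  {BF : LinearMap.BilinForm ℝ V} {ρ : W →* V →ₗ[ℝ] V} (hg : IsGeometricRep cs e BF ρ)
include hg

theorem apply_comm (u v : V) : BF u v = BF v u := hg.1 u v

theorem apply_simple_simple (i j : B) : BF (e i) (e j) = -Real.cos (Real.pi / M i j) :=
  hg.2.1 i j

theorem map_simple_apply (i : B) (v : V) : ρ (cs.simple i) v = v - (2 * BF (e i) v) • e i :=
  hg.2.2 i v

theorem apply_simple_simple_self (i : B) : BF (e i) (e i) = 1 := by
  simp [hg.apply_simple_simple i i]

theorem map_simple_apply_simple_self (i : B) : ρ (cs.simple i) (e i) = -e i := by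
  rw [hg.map_simple_apply, hg.apply_simple_simple_self]
  module

theorem apply_map_map (w : W) (x y : V) : BF (ρ w x) (ρ w y) = BF x y := by
  induction w using cs.simple_induction_left generalizing x y with
  | one => simp
  | mul_simple_left w i ih =>
    simp only [map_mul, Module.End.mul_apply, hg.map_simple_apply, map_sub, map_smul,
      LinearMap.sub_apply, LinearMap.smul_apply, smul_eq_mul, hg.apply_simple_simple_self, ih]
    rw [hg.apply_comm (ρ w x) (e i)]
    ring

theorem apply_root_self (w : W) (i : B) : BF (ρ w (e i)) (ρ w (e i)) = 1 := by
  rw [hg.apply_map_map, hg.apply_simple_simple_self]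

theorem root_ne_zero (w : W) (i : B) : ρ w (e i) ≠ 0 := by
  intro h
  simpa [h] using hg.apply_root_self w i

theorem map_simple_apply_left (i j : B) (x y : ℝ) :
    ρ (cs.simple i) (x • e i + y • e j) = (-(2 * BF (e i) (e j)) * y - x) • e i + y • e j := by
  rw [hg.map_simple_apply]
  simp only [map_add, map_smul, smul_eq_mul, hg.apply_simple_simple_self]
  module

theorem map_simple_apply_right (i j : B) (x y : ℝ) :
    ρ (cs.simple j) (x • e i + y • e j) = x • e i + (-(2 * BF (e i) (e j)) * x - y) • e j := by
  rw [hg.map_simple_apply]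
  simp only [map_add, map_smul, smul_eq_mul, hg.apply_simple_simple_self,
    hg.apply_comm (e j) (e i)]
  module

theorem map_wordProd_alternatingWord (i j : B) (k : ℕ) :
    ρ (cs.wordProd (alternatingWord i j k)) (e i) =
      (S ℝ (if Even k then k else k - 1 : ℤ)).eval (-(2 * BF (e i) (e j))) • e i +
      (S ℝ (if Even k then k - 1 else k : ℤ)).eval (-(2 * BF (e i) (e j))) • e j := by
  induction k with
  | zero => simp [alternatingWord]
  | succ k ih =>
    rw [alternatingWord_succ', wordProd_cons, map_mul, Module.End.mul_apply, ih]
    rcases Nat.even_or_odd k with hk | hk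
    · have hk1 : ¬Even (k + 1) := by simpa [Nat.even_add_one] using hk
      simp only [hk, hk1, if_true, if_false, hg.map_simple_apply_right, Nat.cast_add,
        Nat.cast_one, add_sub_cancel_right, S_add_one, Polynomial.eval_sub, Polynomial.eval_mul,
        Polynomial.eval_X]
    · have hk1 : Even (k + 1) := by simpa [Nat.even_add_one] using hk
      simp only [Nat.not_even_iff_odd.mpr hk, hk1, if_true, if_false,
        hg.map_simple_apply_left, Nat.cast_add, Nat.cast_one, add_sub_cancel_right, S_add_one,
        Polynomial.eval_sub, Polynomial.eval_mul, Polynomial.eval_X]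

theorem exists_nonneg_map_wordProd_alternatingWord {i j : B} (hij : i ≠ j) {k : ℕ}
    (hk : M i j = 0 ∨ k < M i j) :
    ∃ a b : ℝ, 0 ≤ a ∧ 0 ≤ b ∧
      ρ (cs.wordProd (alternatingWord i j k)) (e i) = a • e i + b • e j := by
  have hχ : -(2 * BF (e i) (e j)) = 2 * Real.cos (Real.pi / M i j) := by
    rw [hg.apply_simple_simple i j]
    ring
  have hnonneg : ∀ n : ℤ, -1 ≤ n → n ≤ k → 0 ≤ (S ℝ n).eval (-(2 * BF (e i) (e j))) :=
    fun n hn hnk ↦ hχ ▸ S_eval_two_mul_cos_pi_div_nonneg (M.off_diagonal i j hij) hn (by omega)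
  rw [hg.map_wordProd_alternatingWord]
  refine ⟨_, _, hnonneg _ ?_ ?_, hnonneg _ ?_ ?_, rfl⟩ <;> split_ifs <;> omega

theorem repr_nonneg_of_not_isRightDescent {w : W} {i : B} (h : ¬cs.IsRightDescent w i) :
    0 ≤ e.repr (ρ w (e i)) := by
  induction hn : cs.length w using Nat.strong_induction_on generalizing w i with
  | _ n ih =>
  obtain rfl | hw1 := eq_or_ne w 1
  · simp
  obtain ⟨j, hj⟩ := cs.exists_rightDescent_of_ne_one hw1
  have hij : i ≠ j := by rintro rfl; exact h hj
  obtain ⟨k, hk, hlt, hvi, hvj⟩ := exists_dropAlternating_not_isRightDescent h hj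
  obtain ⟨a, b, ha, hb, hab⟩ := hg.exists_nonneg_map_wordProd_alternatingWord hij hk
  rw [← cs.dropAlternating_mul_wordProd w i j k, map_mul, Module.End.mul_apply, hab]
  simp only [map_add, map_smul]
  exact add_nonneg (smul_nonneg ha (ih _ (hn ▸ hlt) hvi rfl))
    (smul_nonneg hb (ih _ (hn ▸ hlt) hvj rfl))

theorem repr_nonpos_of_isRightDescent {w : W} {i : B} (h : cs.IsRightDescent w i) :
    e.repr (ρ w (e i)) ≤ 0 := by
  have hpos := hg.repr_nonneg_of_not_isRightDescent
    (cs.isRightDescent_iff_not_isRightDescent_mul.mp h)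
  rw [map_mul, Module.End.mul_apply, hg.map_simple_apply_simple_self, map_neg, map_neg] at hpos
  exact neg_nonneg.mp hpos

theorem repr_nonneg_or_nonpos_of_mem_Phi {v : V} (hv : v ∈ Phi ρ e) :
    0 ≤ e.repr v ∨ e.repr v ≤ 0 := by
  obtain ⟨w, i, rfl⟩ := hv
  by_cases h : cs.IsRightDescent w i
  · exact .inr (hg.repr_nonpos_of_isRightDescent h)
  · exact .inl (hg.repr_nonneg_of_not_isRightDescent h)

theorem not_repr_nonneg_and_nonpos_of_mem_Phi {v : V} (hv : v ∈ Phi ρ e)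
    (h₁ : 0 ≤ e.repr v) (h₂ : e.repr v ≤ 0) : False := by
  obtain ⟨w, i, rfl⟩ := hv
  exact hg.root_ne_zero w i (by simpa using le_antisymm h₂ h₁)

theorem eq_simple_of_mem_Phi {v : V} (hv : v ∈ Phi ρ e) (i : B) (h₁ : 0 ≤ e.repr v)
    (h₂ : e.repr (ρ (cs.simple i) v) ≤ 0) : v = e i := by
  classical
  -- `sᵢ` only changes the `αᵢ`-coordinate, so all other coordinates of `v` vanish
  have hrepr : e.repr v = Finsupp.single i (e.repr v i) := by
    ext b
    by_cases hb : b = i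
    · simp [hb]
    have hb' : e.repr v b ≤ 0 := by
      simpa [hg.map_simple_apply, Finsupp.single_eq_of_ne hb] using h₂ b
    simp [Finsupp.single_eq_of_ne hb, le_antisymm hb' (h₁ b)]
  have hv_eq : v = e.repr v i • e i := by
    rw [← e.repr_symm_single, ← hrepr, LinearEquiv.symm_apply_apply]
  obtain ⟨w, r, hwr⟩ := hv
  have hnorm := hg.apply_root_self w r
  rw [← hwr, hv_eq] at hnorm
  simp only [map_smul, LinearMap.smul_apply, smul_eq_mul, hg.apply_simple_simple_self] at hnorm
  have hc : e.repr v i = 1 := by nlinarith [show 0 ≤ e.repr v i from h₁ i]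
  rw [hv_eq, hc, one_smul]

theorem repr_map_nonneg_of_not_mem_rootSeq {l : List B} {v : V} (hv : v ∈ PhiPos ρ e)
    (hvl : v ∉ rootSeq cs ρ e l) (k : ℕ) : 0 ≤ e.repr (ρ (cs.wordProd (l.drop k)) v) := by
  induction l generalizing k with
  | nil => simpa using Finsupp.le_def.mpr hv.2
  | cons i t ih =>
    simp only [rootSeq, List.mem_cons, not_or] at hvl
    cases k with
    | succ k => exact ih hvl.2 k
    | zero =>
      have ht := ih hvl.2 0
      rw [List.drop_zero] at ht ⊢
      have hroot := map_mem_Phi ρ e hv.1 (cs.wordProd t)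
      rw [wordProd_cons, map_mul, Module.End.mul_apply]
      refine (hg.repr_nonneg_or_nonpos_of_mem_Phi
        (map_mem_Phi ρ e hroot (cs.simple i))).resolve_right fun hneg ↦ hvl.1 ?_
      rw [← hg.eq_simple_of_mem_Phi hroot i ht hneg]
      simp [← Module.End.mul_apply, ← map_mul]

section Reduced

variable {l : List B} (hl : cs.IsReduced l)
include hl

theorem repr_map_getElem_rootSeq_nonneg {m k : ℕ} (hm : m < (rootSeq cs ρ e l).length)
    (hmk : m < k) : 0 ≤ e.repr (ρ (cs.wordProd (l.drop k)) (rootSeq cs ρ e l)[m]) := by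
  have hm' : m < l.length := length_rootSeq cs ρ e l ▸ hm
  have hcons : l[m] :: (l.drop (m + 1)).take (k - (m + 1)) = (l.drop m).take (k - m) := by
    rw [List.drop_eq_getElem_cons hm', show k - m = k - (m + 1) + 1 by omega, List.take_succ_cons]
  have hred := (hl.drop m).take (k - m)
  rw [← hcons] at hred
  rw [getElem_rootSeq, ← Module.End.mul_apply, ← map_mul,
    cs.wordProd_drop_eq_mul l (show m + 1 ≤ k by omega), mul_inv_rev, mul_inv_cancel_left,
    ← wordProd_reverse]
  exact hg.repr_nonneg_of_not_isRightDescent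
    (not_isRightDescent_of_isReduced_append_singleton (by simpa using hred.reverse))

theorem repr_map_getElem_rootSeq_nonpos {m k : ℕ} (hm : m < (rootSeq cs ρ e l).length)
    (hkm : k ≤ m) : e.repr (ρ (cs.wordProd (l.drop k)) (rootSeq cs ρ e l)[m]) ≤ 0 := by
  have hm' : m < l.length := length_rootSeq cs ρ e l ▸ hm
  have hsnoc : (l.drop k).take (m + 1 - k) = (l.drop k).take (m - k) ++ [l[m]] := by
    rw [show m + 1 - k = m - k + 1 by omega, List.take_add_one, List.getElem?_drop,
      show k + (m - k) = m by omega, List.getElem?_eq_getElem hm']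
    rfl
  have hred := (hl.drop k).take (m + 1 - k)
  rw [hsnoc] at hred
  rw [getElem_rootSeq, ← Module.End.mul_apply, ← map_mul,
    cs.wordProd_drop_eq_mul l (show k ≤ m + 1 by omega), mul_inv_cancel_right, hsnoc,
    wordProd_append, wordProd_singleton, map_mul, Module.End.mul_apply,
    hg.map_simple_apply_simple_self, map_neg, map_neg, neg_nonpos]
  exact hg.repr_nonneg_of_not_isRightDescent (not_isRightDescent_of_isReduced_append_singleton hred)

theorem repr_map_nonneg_of_stdEncoding_le (lam : PhiPos ρ e) {k : ℕ}
    (hk : stdEncoding cs ρ e l lam ≤ k) :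
    0 ≤ e.repr (ρ (cs.wordProd (l.drop k)) lam) := by
  classical
  by_cases hmem : (lam : V) ∈ rootSeq cs ρ e l
  · have hlt := List.idxOf_lt_length_iff.mpr hmem
    rw [stdEncoding, if_pos hmem] at hk
    rw [← List.getElem_idxOf hlt]
    exact hg.repr_map_getElem_rootSeq_nonneg hl hlt (by omega)
  · exact hg.repr_map_nonneg_of_not_mem_rootSeq lam.2 hmem k

theorem repr_map_nonpos_of_lt_stdEncoding (lam : PhiPos ρ e) {k : ℕ}
    (hk : k < stdEncoding cs ρ e l lam) :
    e.repr (ρ (cs.wordProd (l.drop k)) lam) ≤ 0 := by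
  classical
  have hmem : (lam : V) ∈ rootSeq cs ρ e l := by
    by_contra h
    simp [stdEncoding, h] at hk
  have hlt := List.idxOf_lt_length_iff.mpr hmem
  rw [stdEncoding, if_pos hmem] at hk
  rw [← List.getElem_idxOf hlt]
  exact hg.repr_map_getElem_rootSeq_nonpos hl hlt (by omega)

theorem stdEncoding_le_of_repr_map_nonneg (lam : PhiPos ρ e) {k : ℕ}
    (h : 0 ≤ e.repr (ρ (cs.wordProd (l.drop k)) lam)) : stdEncoding cs ρ e l lam ≤ k := by
  by_contra! hk
  exact hg.not_repr_nonneg_and_nonpos_of_mem_Phi (map_mem_Phi ρ e lam.2.1 _) h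
    (hg.repr_map_nonpos_of_lt_stdEncoding hl lam hk)

theorem lt_stdEncoding_of_repr_map_nonpos (lam : PhiPos ρ e) {k : ℕ}
    (h : e.repr (ρ (cs.wordProd (l.drop k)) lam) ≤ 0) : k < stdEncoding cs ρ e l lam := by
  by_contra! hk
  exact hg.not_repr_nonneg_and_nonpos_of_mem_Phi (map_mem_Phi ρ e lam.2.1 _)
    (hg.repr_map_nonneg_of_stdEncoding_le hl lam hk) h

theorem stdEncoding_mem_Icc_of_eq_add {α β γ : PhiPos ρ e} {a b : ℝ} (ha : 0 ≤ a) (hb : 0 ≤ b)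
    (hγ : (γ : V) = a • (α : V) + b • (β : V))
    (hαβ : stdEncoding cs ρ e l α ≤ stdEncoding cs ρ e l β) :
    stdEncoding cs ρ e l γ ∈ Set.Icc (stdEncoding cs ρ e l α) (stdEncoding cs ρ e l β) := by
  have hrepr (k : ℕ) : e.repr (ρ (cs.wordProd (l.drop k)) γ) =
      a • e.repr (ρ (cs.wordProd (l.drop k)) α) + b • e.repr (ρ (cs.wordProd (l.drop k)) β) := by
    simp only [hγ, map_add, map_smul]
  constructor
  · obtain hα | hα := Nat.eq_zero_or_pos (stdEncoding cs ρ e l α)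
    · omega
    have hneg : e.repr (ρ (cs.wordProd (l.drop (stdEncoding cs ρ e l α - 1))) γ) ≤ 0 := by
      rw [hrepr]
      exact add_nonpos
        (smul_nonpos_of_nonneg_of_nonpos ha (hg.repr_map_nonpos_of_lt_stdEncoding hl α (by omega)))
        (smul_nonpos_of_nonneg_of_nonpos hb (hg.repr_map_nonpos_of_lt_stdEncoding hl β (by omega)))
    have := hg.lt_stdEncoding_of_repr_map_nonpos hl γ hneg
    omega
  · apply hg.stdEncoding_le_of_repr_map_nonneg hl γ
    rw [hrepr]
    exact add_nonneg (smul_nonneg ha (hg.repr_map_nonneg_of_stdEncoding_le hl α hαβ))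
      (smul_nonneg hb (hg.repr_map_nonneg_of_stdEncoding_le hl β le_rfl))

end Reduced

end IsGeometricRep

theorem stdEncoding_isStandard_general
    {M : CoxeterMatrix B} (cs : CoxeterSystem M W) (e : Module.Basis B ℝ V)
    (BF : LinearMap.BilinForm ℝ V) (ρ : W →* V →ₗ[ℝ] V)
    (hgeo : IsGeometricRep cs e BF ρ)
    (l : List B) (hred : cs.IsReduced l) :
    IsStandardLabeling ρ e (stdEncoding cs ρ e l) := by
  intro α β γ a b _ ha hb hγ
  rcases le_total (stdEncoding cs ρ e l α) (stdEncoding cs ρ e l β) with h | h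
  · exact .inl (hgeo.stdEncoding_mem_Icc_of_eq_add hred ha hb hγ h)
  · exact .inr (hgeo.stdEncoding_mem_Icc_of_eq_add hred hb ha (by rw [hγ, add_comm]) h)

/-- If `x` is a reduced expression for `w`, then the standard encoding `T_x`
is a standard labeling of `Φ⁺`. -/
theorem stdEncoding_isStandard
    {M : CoxeterMatrix B} (cs : CoxeterSystem M W) (e : Module.Basis B ℝ V)
    (BF : LinearMap.BilinForm ℝ V) (ρ : W →* V →ₗ[ℝ] V)
    (hgeo : IsGeometricRep cs e BF ρ)
    (l : List B) (w : W) (hred : cs.IsReduced l) (hw : cs.wordProd l = w) :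
    IsStandardLabeling ρ e (stdEncoding cs ρ e l) :=
  stdEncoding_isStandard_general cs e BF ρ hgeo l hred
end
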